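/- Let (Ω, 𝒜, P) be a probability space, X, S : Ω → ℝ^m random vectors and Y : Ω → ℝ a square-integrable random variable. If Y and S are conditionally independent given the σ-algebra σ(X) generated by X, then almost surely Var(Y | σ(S)) = E[Var(Y | σ(X)) | σ(S)] + Var(E[Y | σ(X)] | σ(S)). -/

import Mathlib

open MeasureTheory ProbabilityTheory

/-- Conditional independence of two random variables `Y` and `S` given a
σ-algebra `m`: for all bounded measurable `f`, `g`,
`E[f(Y) g(S) | m] = E[f(Y) | m] ⋅ E[g(S) | m]` almost surely. -/
def CondIndepFunGiven {Ω : Type*} [MeasurableSpace Ω] (P : Measure Ω)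
    (m : MeasurableSpace Ω) {β γ : Type*} [MeasurableSpace β] [MeasurableSpace γ]
    (Y : Ω → β) (S : Ω → γ) : Prop :=
  ∀ (f : β → ℝ) (g : γ → ℝ), Measurable f → Measurable g →
    (∃ C, ∀ x, |f x| ≤ C) → (∃ C, ∀ x, |g x| ≤ C) →
    P[fun ω => f (Y ω) * g (S ω) | m] =ᵐ[P]
      fun ω => (P[fun ω' => f (Y ω') | m]) ω * (P[fun ω' => g (S ω') | m]) ω

/-- Conditional variance `Var(Y | m) = E[Y² | m] − (E[Y | m])²`. -/
noncomputable def condVarGiven {Ω : Type*} [MeasurableSpace Ω] (P : Measure Ω)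
    (m : MeasurableSpace Ω) (Y : Ω → ℝ) : Ω → ℝ :=
  fun ω => (P[fun ω' => (Y ω') ^ 2 | m]) ω - ((P[Y | m]) ω) ^ 2

section Aux

open Filter Topology

variable {Ω : Type*} {m0 : MeasurableSpace Ω} {P : Measure Ω} [IsProbabilityMeasure P]

noncomputable def trunc (n : ℕ) (t : ℝ) : ℝ := max (min t n) (-(n : ℝ))

lemma trunc_meas (n : ℕ) : Measurable (trunc n) :=
  (measurable_id.min measurable_const).max measurable_const

lemma trunc_abs_le_n (n : ℕ) (t : ℝ) : |trunc n t| ≤ n := by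
  rw [abs_le]
  refine ⟨le_max_right _ _, max_le ((min_le_right _ _)) ((neg_nonpos.mpr (Nat.cast_nonneg n)).trans (Nat.cast_nonneg n))⟩

lemma trunc_abs_le (n : ℕ) (t : ℝ) : |trunc n t| ≤ |t| := by
  rw [abs_le]
  constructor
  · exact le_max_of_le_left (le_min (neg_abs_le t) ((neg_nonpos.mpr (abs_nonneg t)).trans (Nat.cast_nonneg n)))
  · exact max_le ((min_le_left _ _).trans (le_abs_self t))
      ((neg_nonpos.mpr (Nat.cast_nonneg n)).trans (abs_nonneg t))

lemma trunc_tendsto (t : ℝ) : Tendsto (fun n => trunc n t) atTop (𝓝 t) := by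
  refine Tendsto.congr' ?_ (tendsto_const_nhds : Tendsto _ atTop (nhds t))
  filter_upwards [Filter.eventually_atTop.2 ⟨⌈|t|⌉₊, fun n hn => hn⟩] with n hn
  have h1 : |t| ≤ (n : ℝ) := (Nat.le_ceil _).trans (Nat.cast_le.mpr hn)
  have h2 : t ≤ (n : ℝ) := (le_abs_self t).trans h1
  have h3 : -(n : ℝ) ≤ t := by
    have := neg_abs_le t; linarith
  simp [trunc, min_eq_left h2, max_eq_left h3]

lemma bdd_integrable {u : Ω → ℝ} (hu : Measurable u) {C : ℝ} (hC : ∀ ω, |u ω| ≤ C) :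
    Integrable u P :=
  (memLp_top_of_bound hu.aestronglyMeasurable C (Filter.Eventually.of_forall hC)).integrable le_top

lemma step1 {m : MeasurableSpace Ω} (hm : m ≤ m0)
    {u v : Ω → ℝ} (hu : Measurable[m0] u) (hv : Measurable[m0] v)
    {Cu Cv : ℝ} (hCu : ∀ ω, |u ω| ≤ Cu) (hCv : ∀ ω, |v ω| ≤ Cv)
    (h : P[fun ω => u ω * v ω|m] =ᵐ[P] fun ω => (P[u|m]) ω * (P[v|m]) ω) :
    ∫ ω, u ω * v ω ∂P = ∫ ω, (P[u|m]) ω * v ω ∂P := by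
  have hu_int : Integrable u P := bdd_integrable hu hCu
  have hv_int : Integrable v P := bdd_integrable hv hCv
  have huv_int : Integrable (fun ω => u ω * v ω) P :=
    hu_int.bdd_mul (c := Cv) (hv.aestronglyMeasurable (μ := P))
      (Filter.Eventually.of_forall (fun ω => by simpa using hCv ω)) |>.congr
      (Filter.Eventually.of_forall (fun ω => mul_comm _ _))
  have hEu_v_int : Integrable (fun ω => (P[u|m]) ω * v ω) P := by
    have := (integrable_condExp (f := u) (m := m) (μ := P)).bdd_mul (c := Cv)
      (hv.aestronglyMeasurable (μ := P)) (Filter.Eventually.of_forall (fun ω => by simpa using hCv ω))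
    exact this.congr (Filter.Eventually.of_forall (fun ω => mul_comm _ _))
  have pullout : P[fun ω => (P[u|m]) ω * v ω|m]
      =ᵐ[P] fun ω => (P[u|m]) ω * (P[v|m]) ω :=
    condExp_mul_of_stronglyMeasurable_left stronglyMeasurable_condExp hEu_v_int hv_int
  calc ∫ ω, u ω * v ω ∂P
      = ∫ ω, (P[fun ω => u ω * v ω|m]) ω ∂P := (integral_condExp (μ := P) (f := fun ω => u ω * v ω) hm).symm
    _ = ∫ ω, (P[u|m]) ω * (P[v|m]) ω ∂P := integral_congr_ae h
    _ = ∫ ω, (P[fun ω => (P[u|m]) ω * v ω|m]) ω ∂P := (integral_congr_ae pullout).symm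
    _ = ∫ ω, (P[u|m]) ω * v ω ∂P := integral_condExp (μ := P) hm

end Aux

open Filter Topology

lemma memℒp_two_condexp {Ω : Type*} {m m0 : MeasurableSpace Ω} (hm : m ≤ m0)
    {P : Measure Ω} [IsProbabilityMeasure P] {Y : Ω → ℝ}
    (hY2 : MemLp Y 2 P) : MemLp (P[Y|m]) 2 P := by
  have hYint : Integrable Y P := hY2.integrable one_le_two
  have hmem : MemLp (((condExpL2 ℝ ℝ hm (hY2.toLp Y) : lpMeas ℝ ℝ m 2 P) : Lp ℝ 2 P) : Ω → ℝ) 2 P :=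
    Lp.memLp _
  refine hmem.ae_eq ?_
  refine ae_eq_condExp_of_forall_setIntegral_eq hm hYint
    (fun s _ _ => (hmem.integrable one_le_two).integrableOn)
    (fun s hs hμs => ?_) (lpMeas.aestronglyMeasurable _)
  rw [integral_condExpL2_eq hm (hY2.toLp Y) hs hμs.ne]
  exact setIntegral_congr_ae (hm s hs) ((MemLp.coeFn_toLp hY2).mono fun x hx _ => hx)

lemma condexp_condexp_key {Ω : Type*} {m' m0 : MeasurableSpace Ω} (hm' : m' ≤ m0)
    {P : Measure Ω} [IsProbabilityMeasure P]
    {β γ : Type*} [mβ : MeasurableSpace β] [mγ : MeasurableSpace γ]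
    {Y : Ω → β} {S : Ω → γ} (hY : Measurable Y) (hS : Measurable S)
    (hci : CondIndepFunGiven P m' Y S)
    (φ : β → ℝ) (hφ : Measurable φ) (hint : Integrable (fun ω => φ (Y ω)) P) :
    P[ P[fun ω => φ (Y ω)|m'] | MeasurableSpace.comap S mγ]
      =ᵐ[P] P[fun ω => φ (Y ω) | MeasurableSpace.comap S mγ] := by
  have hmS : MeasurableSpace.comap S mγ ≤ m0 := hS.comap_le
  have hhm : Measurable[m0] (fun ω => φ (Y ω)) := hφ.comp hY
  have core : ∀ B : Set γ, MeasurableSet B →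
      ∫ ω in S ⁻¹' B, (P[fun ω' => φ (Y ω')|m']) ω ∂P = ∫ ω in S ⁻¹' B, φ (Y ω) ∂P := by
    intro B hB
    set g : γ → ℝ := B.indicator (fun _ => 1) with hgdef
    have hgmeas : Measurable g := measurable_const.indicator hB
    have hgbd : ∀ x, |g x| ≤ 1 := by
      intro x; by_cases hx : x ∈ B <;> simp [g, hx]
    have hrw : ∀ F : Ω → ℝ, ∫ ω in S ⁻¹' B, F ω ∂P = ∫ ω, F ω * g (S ω) ∂P := by
      intro F
      rw [← integral_indicator (hS hB)]
      refine integral_congr_ae (Filter.Eventually.of_forall fun ω => ?_)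
      by_cases hω : S ω ∈ B <;> simp [Set.indicator, hω, g]
    have hEq : ∀ n : ℕ,
        ∫ ω, trunc n (φ (Y ω)) * g (S ω) ∂P
          = ∫ ω, (P[fun ω' => trunc n (φ (Y ω'))|m']) ω * g (S ω) ∂P :=
      fun n => step1 hm' ((trunc_meas n).comp hhm) (hgmeas.comp hS)
        (fun ω => trunc_abs_le_n n (φ (Y ω))) (fun ω => hgbd (S ω))
        (hci (fun b => trunc n (φ b)) g ((trunc_meas n).comp hφ) hgmeas
          ⟨n, fun x => trunc_abs_le_n n (φ x)⟩ ⟨1, hgbd⟩)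
    have hlim1 : Tendsto (fun n => ∫ ω, trunc n (φ (Y ω)) * g (S ω) ∂P) atTop
        (𝓝 (∫ ω, φ (Y ω) * g (S ω) ∂P)) := by
      refine tendsto_integral_of_dominated_convergence (fun ω => |φ (Y ω)|)
        (fun n => (((trunc_meas n).comp hhm).mul (hgmeas.comp hS)).aestronglyMeasurable)
        hint.abs (fun n => Filter.Eventually.of_forall fun ω => ?_)
        (Filter.Eventually.of_forall fun ω => ((trunc_tendsto (φ (Y ω))).mul_const _))
      calc ‖trunc n (φ (Y ω)) * g (S ω)‖ = |trunc n (φ (Y ω))| * |g (S ω)| := abs_mul _ _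
        _ ≤ |φ (Y ω)| * 1 := mul_le_mul (trunc_abs_le n _) (hgbd _) (abs_nonneg _) (abs_nonneg _)
        _ = |φ (Y ω)| := mul_one _
    have hdiff : Tendsto (fun n => ∫ ω, |trunc n (φ (Y ω)) - φ (Y ω)| ∂P) atTop (𝓝 0) := by
      have h0 : (0:ℝ) = ∫ (_ : Ω), (0:ℝ) ∂P := by simp
      rw [h0]
      refine tendsto_integral_of_dominated_convergence (fun ω => 2 * |φ (Y ω)|)
        (fun n => (((trunc_meas n).comp hhm).sub hhm).abs.aestronglyMeasurable)
        (hint.abs.const_mul 2) (fun n => Filter.Eventually.of_forall fun ω => ?_)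
        (Filter.Eventually.of_forall fun ω => ?_)
      · rw [Real.norm_eq_abs, abs_abs]
        calc |trunc n (φ (Y ω)) - φ (Y ω)| ≤ |trunc n (φ (Y ω))| + |φ (Y ω)| := abs_sub _ _
          _ ≤ |φ (Y ω)| + |φ (Y ω)| := add_le_add_left (trunc_abs_le _ _) _
          _ = 2 * |φ (Y ω)| := (two_mul _).symm
      · simpa using ((trunc_tendsto (φ (Y ω))).sub_const (φ (Y ω))).abs
    have hlim2 : Tendsto (fun n => ∫ ω, (P[fun ω' => trunc n (φ (Y ω'))|m']) ω * g (S ω) ∂P) atTop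
        (𝓝 (∫ ω, (P[fun ω' => φ (Y ω')|m']) ω * g (S ω) ∂P)) := by
      rw [tendsto_iff_dist_tendsto_zero]
      simp only [Real.dist_eq]
      refine squeeze_zero (fun n => abs_nonneg _) (fun n => ?_) hdiff
      have hintn : Integrable (fun ω => trunc n (φ (Y ω))) P :=
        bdd_integrable ((trunc_meas n).comp hhm) (fun ω => trunc_abs_le_n n _)
      have hEn_g : Integrable (fun ω => (P[fun ω' => trunc n (φ (Y ω'))|m']) ω * g (S ω)) P := by
        have := (integrable_condExp (μ := P) (m := m') (f := fun ω' => trunc n (φ (Y ω')))).bdd_mul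
          (c := 1) ((hgmeas.comp hS).aestronglyMeasurable (μ := P))
          (Filter.Eventually.of_forall (fun ω => by simpa using hgbd (S ω)))
        exact this.congr (Filter.Eventually.of_forall (fun ω => mul_comm _ _))
      have hEh_g : Integrable (fun ω => (P[fun ω' => φ (Y ω')|m']) ω * g (S ω)) P := by
        have := (integrable_condExp (μ := P) (m := m') (f := fun ω' => φ (Y ω'))).bdd_mul
          (c := 1) ((hgmeas.comp hS).aestronglyMeasurable (μ := P))
          (Filter.Eventually.of_forall (fun ω => by simpa using hgbd (S ω)))
        exact this.congr (Filter.Eventually.of_forall (fun ω => mul_comm _ _))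
      rw [← integral_sub hEn_g hEh_g]
      have habs : |∫ ω, ((P[fun ω' => trunc n (φ (Y ω'))|m']) ω * g (S ω)
            - (P[fun ω' => φ (Y ω')|m']) ω * g (S ω)) ∂P|
          ≤ ∫ ω, |(P[fun ω' => trunc n (φ (Y ω'))|m']) ω - (P[fun ω' => φ (Y ω')|m']) ω| ∂P := by
        rw [← Real.norm_eq_abs]
        refine le_trans (norm_integral_le_integral_norm _) ?_
        simp only [Real.norm_eq_abs]
        refine integral_mono (hEn_g.sub hEh_g).abs
          ((integrable_condExp.sub integrable_condExp).abs) (fun ω => ?_)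
        simp only [← sub_mul, abs_mul]
        exact mul_le_of_le_one_right (abs_nonneg _) (hgbd _)
      refine habs.trans ?_
      have hcsub : (fun ω => (P[fun ω' => trunc n (φ (Y ω'))|m']) ω - (P[fun ω' => φ (Y ω')|m']) ω)
          =ᵐ[P] P[(fun ω' => trunc n (φ (Y ω'))) - (fun ω' => φ (Y ω'))|m'] :=
        (condExp_sub hintn hint _).symm
      have : ∫ ω, |(P[fun ω' => trunc n (φ (Y ω'))|m']) ω - (P[fun ω' => φ (Y ω')|m']) ω| ∂P
          = ∫ ω, |(P[(fun ω' => trunc n (φ (Y ω'))) - (fun ω' => φ (Y ω'))|m']) ω| ∂P := by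
        refine integral_congr_ae ?_
        filter_upwards [hcsub] with ω hω
        rw [hω]
      rw [this]
      exact integral_abs_condExp_le _
    rw [hrw, hrw]
    exact (tendsto_nhds_unique ((funext hEq : _) ▸ hlim1) hlim2).symm
  refine ae_eq_condExp_of_forall_setIntegral_eq hmS hint
    (fun s _ _ => integrable_condExp.integrableOn)
    (fun s hs _ => ?_)
    (StronglyMeasurable.aestronglyMeasurable stronglyMeasurable_condExp)
  rw [setIntegral_condExp hmS integrable_condExp hs]
  obtain ⟨B, hB, rfl⟩ := hs
  exact core B hB

/-- conditional law of total variance, Equation (6):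
if `Y` and `S` are conditionally independent given `σ(X)`, then a.s.
`Var(Y | σ(S)) = E[Var(Y | σ(X)) | σ(S)] + Var(E[Y | σ(X)] | σ(S))`. -/
theorem conditional_law_of_total_variance
    {Ω : Type*} [MeasurableSpace Ω] {P : Measure Ω} [IsProbabilityMeasure P]
    {m : ℕ} (X S : Ω → Fin m → ℝ) (Y : Ω → ℝ)
    (hX : Measurable X) (hS : Measurable S) (hY : Measurable Y)
    (hY2 : MemLp Y 2 P)
    (hci : CondIndepFunGiven P (MeasurableSpace.comap X inferInstance) Y S) :
    condVarGiven P (MeasurableSpace.comap S inferInstance) Y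
      =ᵐ[P]
    fun ω =>
      (P[condVarGiven P (MeasurableSpace.comap X inferInstance) Y
          | MeasurableSpace.comap S inferInstance]) ω
      + condVarGiven P (MeasurableSpace.comap S inferInstance)
          (P[Y | MeasurableSpace.comap X inferInstance]) ω := by
  have hmX : MeasurableSpace.comap X inferInstance ≤ ‹MeasurableSpace Ω› := hX.comap_le
  have hYint : Integrable Y P := hY2.integrable one_le_two
  have hY2int : Integrable (fun ω => Y ω ^ 2) P := hY2.integrable_sq
  have hZ2 : MemLp (P[Y|MeasurableSpace.comap X inferInstance]) 2 P :=
    memℒp_two_condexp hmX hY2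
  have hZ2int : Integrable
      (fun ω => ((P[Y|MeasurableSpace.comap X inferInstance]) ω) ^ 2) P := hZ2.integrable_sq
  have key_sq : P[ P[fun ω => Y ω ^ 2|MeasurableSpace.comap X inferInstance]
        | MeasurableSpace.comap S inferInstance]
      =ᵐ[P] P[fun ω => Y ω ^ 2 | MeasurableSpace.comap S inferInstance] :=
    condexp_condexp_key hmX hY hS hci (fun t => t ^ 2) (measurable_id.pow_const 2) hY2int
  have key_id : P[ P[Y|MeasurableSpace.comap X inferInstance]
        | MeasurableSpace.comap S inferInstance]
      =ᵐ[P] P[Y | MeasurableSpace.comap S inferInstance] :=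
    condexp_condexp_key hmX hY hS hci (fun t => t) measurable_id hYint
  have hsub : P[condVarGiven P (MeasurableSpace.comap X inferInstance) Y
        | MeasurableSpace.comap S inferInstance]
      =ᵐ[P] (P[ P[fun ω => Y ω ^ 2|MeasurableSpace.comap X inferInstance]
            | MeasurableSpace.comap S inferInstance])
        - (P[fun ω => ((P[Y|MeasurableSpace.comap X inferInstance]) ω) ^ 2
            | MeasurableSpace.comap S inferInstance]) :=
    condExp_sub integrable_condExp hZ2int _
  filter_upwards [hsub, key_sq, key_id] with ω h1 h2 h3
  have h1' : (P[condVarGiven P (MeasurableSpace.comap X inferInstance) Y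
        | MeasurableSpace.comap S inferInstance]) ω
      = (P[ P[fun ω => Y ω ^ 2|MeasurableSpace.comap X inferInstance]
            | MeasurableSpace.comap S inferInstance]) ω
        - (P[fun ω => ((P[Y|MeasurableSpace.comap X inferInstance]) ω) ^ 2
            | MeasurableSpace.comap S inferInstance]) ω := h1
  show (P[fun ω' => Y ω' ^ 2 | MeasurableSpace.comap S inferInstance]) ω
      - ((P[Y | MeasurableSpace.comap S inferInstance]) ω) ^ 2
    = (P[condVarGiven P (MeasurableSpace.comap X inferInstance) Y
          | MeasurableSpace.comap S inferInstance]) ω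
      + ((P[fun ω' => ((P[Y|MeasurableSpace.comap X inferInstance]) ω') ^ 2
            | MeasurableSpace.comap S inferInstance]) ω
        - ((P[ P[Y|MeasurableSpace.comap X inferInstance]
            | MeasurableSpace.comap S inferInstance]) ω) ^ 2)
  rw [h1', h2, h3]
  ring
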